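/- arXiv:2407.02326 — 2 statements merged into one kernel-verified Lean document; each statement's English description precedes it below -/
import Mathlib

section
/- Let (Q, ρ, σ, τ) be a string algebra datum with sign maps and let v ∈ Q₀. Then the map sgn : (H_l(v), <_l) → ({0,1}*, <₂) is an order embedding: it is injective, and for all 𝔵, 𝔶 ∈ H_l(v) one has 𝔵 <_l 𝔶 if and only if sgn(𝔵) <₂ sgn(𝔶). -/
/-- The inorder relation `<₂` on finite binary words: `x <₂ y` iff, writing
`x = w·x'`, `y = w·y'` with `w` the longest common prefix, either `x'` begins
with `0`(=`false`) or `y'` begins with `1`(=`true`). -/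
def inlt : List Bool → List Bool → Prop
  | [], [] => False
  | [], b :: _ => b = true
  | a :: _, [] => a = false
  | a :: x, b :: y => (a = false ∧ b = true) ∨ (a = b ∧ inlt x y)

/-- A string algebra datum: a finite quiver together with a finite nonempty set `ρ`
of blocking paths of length at least 2, satisfying the string algebra conditions. -/
structure StringAlgData where
  /-- the vertices -/
  V : Type
  /-- the arrows -/
  A : Type
  finV : Finite V
  finA : Finite A
  src : A → V
  tgt : A → V
  /-- the blocking relations: a finite set of paths, recorded as lists of arrows
  `[α₁, …, αₙ]` (read right to left, i.e. `s αᵢ = t αᵢ₊₁`) -/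
  ρ : Finset (List A)
  ρ_ne : ρ.Nonempty
  ρ_len : ∀ p ∈ ρ, 2 ≤ p.length
  ρ_path : ∀ p ∈ ρ, p.Chain' (fun a b => src a = tgt b)
  /-- at most two arrows out of any vertex -/
  two_out : ∀ (v : V) (a b c : A), src a = v → src b = v → src c = v → a = b ∨ a = c ∨ b = c
  /-- at most two arrows into any vertex -/
  two_in : ∀ (v : V) (a b c : A), tgt a = v → tgt b = v → tgt c = v → a = b ∨ a = c ∨ b = c
  /-- for every arrow `b`, at most one arrow `a` with `ab ∉ ρ` -/
  unblocked_left : ∀ b a a' : A, src a = tgt b → src a' = tgt b →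
    [a, b] ∉ ρ → [a', b] ∉ ρ → a = a'
  /-- for every arrow `b`, at most one arrow `c` with `bc ∉ ρ` -/
  unblocked_right : ∀ b c c' : A, src b = tgt c → src b = tgt c' →
    [b, c] ∉ ρ → [b, c'] ∉ ρ → c = c'

namespace StringAlgData

variable (D : StringAlgData)

/-- Syllables: direct syllables (`Sum.inl`) and inverse syllables (`Sum.inr`). -/
abbrev Syll := D.A ⊕ D.A

/-- The source of a syllable. -/
def sylSrc : D.Syll → D.V
  | .inl a => D.src a
  | .inr a => D.tgt a

/-- The target of a syllable. -/
def sylTgt : D.Syll → D.V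
  | .inl a => D.tgt a
  | .inr a => D.src a

/-- The inverse of a syllable. -/
def sylInv : D.Syll → D.Syll
  | .inl a => .inr a
  | .inr a => .inl a

/-- A walk: a nonempty word `α₁⋯αₙ` over the syllables (stored as the list
`[α₁, …, αₙ]`) with `s(αᵢ) = t(αᵢ₊₁)` for all `i`. -/
def IsWalk (w : List D.Syll) : Prop :=
  w ≠ [] ∧ w.Chain' (fun α β => D.sylSrc α = D.sylTgt β)

/-- A (nonempty) string: a walk none of whose factors, nor inverse of a factor,
lies in `ρ`, and without a syllable immediately followed by its inverse. -/
def IsString (w : List D.Syll) : Prop :=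
  D.IsWalk w ∧
  (∀ p ∈ D.ρ, ¬ (p.map (Sum.inl : D.A → D.Syll)) <:+: w ∧
    ¬ ((p.map (Sum.inr : D.A → D.Syll)).reverse) <:+: w) ∧
  w.Chain' (fun α β => α ≠ D.sylInv β)

/-- The bit associated to a syllable: `0`(=`false`) for direct, `1`(=`true`) for inverse. -/
def sylBit : D.Syll → Bool
  | .inl _ => false
  | .inr _ => true

/-- The sign sequence of a string in `H_l(v)`: `sgn(1) = ε`, `sgn(α𝔶) = sgn(𝔶)·0` for a
direct syllable `α` and `sgn(α𝔶) = sgn(𝔶)·1` for an inverse syllable `α`. -/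
def sgn : List D.Syll → List Bool
  | [] => []
  | α :: y => sgn y ++ [D.sylBit α]

/-- The value of the extended `σ`-map on a syllable, given sign maps `sgm`, `tau` on arrows. -/
def sylSgm (sgm tau : D.A → ℤ) : D.Syll → ℤ
  | .inl a => sgm a
  | .inr a => tau a

/-- Membership in the left hammock `H_l(v)`: the zero-length string `1_{(v,1)}`
(recorded as the empty list) together with all nonempty strings `𝔵` with
`s(𝔵) = v` and `σ(𝔵) = -1`. -/
def InHl (sgm tau : D.A → ℤ) (v : D.V) (w : List D.Syll) : Prop :=
  w = [] ∨ (D.IsString w ∧ ∃ α, w.getLast? = some α ∧ D.sylSrc α = v ∧ D.sylSgm sgm tau α = -1)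

/-- The hammock order `<_l`: for `𝔵 = 𝔵'𝔴`, `𝔶 = 𝔶'𝔴` with `𝔴` the longest common
suffix, `𝔵 <_l 𝔶` iff the rightmost syllable of `𝔵'` is direct or the rightmost
syllable of `𝔶'` is inverse. -/
def ltl (x y : List D.Syll) : Prop :=
  ∃ w x' y', x = x' ++ w ∧ y = y' ++ w ∧
    (∀ α, ¬ (x'.getLast? = some α ∧ y'.getLast? = some α)) ∧
    ((∃ a, x'.getLast? = some (Sum.inl a)) ∨ (∃ a, y'.getLast? = some (Sum.inr a)))

end StringAlgData

/-!
Read from the right, the words of `H_l(v)` form a rooted subtree of the infinite binary tree: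
the set is closed under suffixes, and by the string algebra axioms together with the sign
conditions a word `𝔷` has at most one extension `α𝔷` in `H_l(v)` with `α` direct and at most
one with `α` inverse. Then `sgn` is the address of a node in the binary tree, hence injective,
and comparing two words at their longest common suffix shows that `<_l` is the in-order of
the tree, which on addresses is `<₂`.
-/

theorem inlt_asymm : ∀ {x y : List Bool}, inlt x y → ¬ inlt y x
  | [], [], h, _ => h
  | [], _ :: _, h, h' => by simp_all [inlt]
  | _ :: _, [], h, h' => by simp_all [inlt]
  | _ :: _, _ :: _, h, h' => by
    rcases h with ⟨rfl, rfl⟩ | ⟨rfl, h⟩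
    · simp [inlt] at h'
    · rcases h' with ⟨rfl, h'⟩ | ⟨-, h'⟩
      · simp at h'
      · exact inlt_asymm h h'

theorem inlt_append_left (w : List Bool) {x y : List Bool} :
    inlt (w ++ x) (w ++ y) ↔ inlt x y := by
  induction w with
  | nil => rfl
  | cons a w ih => simp [inlt, ih]

theorem inlt_cons_cons_of_ne {a b : Bool} (hab : a ≠ b) (x y : List Bool) :
    inlt (a :: x) (b :: y) ↔ a = false := by
  cases a <;> cases b <;> simp_all [inlt]

theorem List.exists_common_prefix {S : Type*} : ∀ x y : List S, ∃ w x' y',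
    x = w ++ x' ∧ y = w ++ y' ∧ ∀ a, ¬ (x'.head? = some a ∧ y'.head? = some a)
  | [], y => ⟨[], [], y, rfl, rfl, by simp⟩
  | a :: x, [] => ⟨[], a :: x, [], rfl, rfl, by simp⟩
  | a :: x, b :: y => by
    by_cases hab : a = b
    · obtain ⟨w, x', y', rfl, rfl, h⟩ := exists_common_prefix x y
      exact ⟨a :: w, x', y', rfl, by rw [hab]; rfl, h⟩
    · exact ⟨[], a :: x, b :: y, rfl, rfl, by rintro c ⟨⟨⟩, ⟨⟩⟩; exact hab rfl⟩

theorem List.exists_common_suffix {S : Type*} (x y : List S) : ∃ w x' y',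
    x = x' ++ w ∧ y = y' ++ w ∧ ∀ a, ¬ (x'.getLast? = some a ∧ y'.getLast? = some a) := by
  obtain ⟨w, x', y', hx, hy, h⟩ := exists_common_prefix x.reverse y.reverse
  refine ⟨w.reverse, x'.reverse, y'.reverse, ?_, ?_, by simpa using h⟩
  · rw [← reverse_append, ← hx, reverse_reverse]
  · rw [← reverse_append, ← hy, reverse_reverse]

namespace StringAlgData

variable {D : StringAlgData}

theorem sgn_append (x y : List D.Syll) : D.sgn (x ++ y) = D.sgn y ++ D.sgn x := by
  induction x with
  | nil => simp [sgn]
  | cons α x ih => simp [sgn, ih]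

theorem sgn_concat (x : List D.Syll) (α : D.Syll) :
    D.sgn (x ++ [α]) = D.sylBit α :: D.sgn x := by
  rw [sgn_append]; rfl

theorem ltl_or_ltl_of_ne {x y : List D.Syll} (hxy : x ≠ y) : D.ltl x y ∨ D.ltl y x := by
  obtain ⟨w, x', y', rfl, rfl, hlast⟩ := List.exists_common_suffix x y
  have hlast' : ∀ α, ¬ (y'.getLast? = some α ∧ x'.getLast? = some α) :=
    fun α h => hlast α h.symm
  rcases hx : x'.getLast? with _ | (a | a)
  · rcases hy : y'.getLast? with _ | (b | b)
    · simp_all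
    · exact Or.inr ⟨w, y', x', rfl, rfl, hlast', Or.inl ⟨b, hy⟩⟩
    · exact Or.inl ⟨w, x', y', rfl, rfl, hlast, Or.inr ⟨b, hy⟩⟩
  · exact Or.inl ⟨w, x', y', rfl, rfl, hlast, Or.inl ⟨a, hx⟩⟩
  · exact Or.inr ⟨w, y', x', rfl, rfl, hlast', Or.inr ⟨a, hx⟩⟩

structure IsBinaryTree (H : Set (List D.Syll)) : Prop where
  suffix_mem : ∀ ⦃x s⦄, x ∈ H → s <:+ x → s ∈ H
  eq_of_cons_mem : ∀ ⦃α β z⦄, α :: z ∈ H → β :: z ∈ H →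
    D.sylBit α = D.sylBit β → α = β

namespace IsBinaryTree

variable {H : Set (List D.Syll)}

theorem sgn_injOn (hH : D.IsBinaryTree H) : Set.InjOn D.sgn H := by
  intro x hx y hy hxy
  induction x generalizing y with
  | nil => cases y with
    | nil => rfl
    | cons β y => simp [sgn] at hxy
  | cons α x ih => cases y with
    | nil => simp [sgn] at hxy
    | cons β y =>
      obtain ⟨hxy, hbit⟩ := List.append_inj' hxy rfl
      obtain rfl := ih (hH.suffix_mem hx (List.suffix_cons α x)) (hH.suffix_mem hy
        (List.suffix_cons β y)) hxy
      rw [hH.eq_of_cons_mem hx hy (List.singleton_inj.mp hbit)]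

theorem inlt_sgn_of_ltl (hH : D.IsBinaryTree H) {x y : List D.Syll} (hx : x ∈ H) (hy : y ∈ H)
    (h : D.ltl x y) : inlt (D.sgn x) (D.sgn y) := by
  obtain ⟨w, x', y', rfl, rfl, hlast, hdir⟩ := h
  rw [sgn_append, sgn_append, inlt_append_left]
  rcases List.eq_nil_or_concat' x' with rfl | ⟨x', α, rfl⟩ <;>
    rcases List.eq_nil_or_concat' y' with rfl | ⟨y', β, rfl⟩
  · simp at hdir
  · obtain ⟨b, rfl⟩ : ∃ b, β = Sum.inr b := by simpa using hdir
    simp [sgn_concat, sgn, inlt, sylBit]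
  · obtain ⟨a, rfl⟩ : ∃ a, α = Sum.inl a := by simpa using hdir
    simp [sgn_concat, sgn, inlt, sylBit]
  · have hαβ : α ≠ β := fun h => hlast α (by simp [h])
    have hbit : D.sylBit α ≠ D.sylBit β := fun h => hαβ <| hH.eq_of_cons_mem (z := w)
      (hH.suffix_mem hx ⟨x', by simp⟩) (hH.suffix_mem hy ⟨y', by simp⟩) h
    rw [sgn_concat, sgn_concat, inlt_cons_cons_of_ne hbit]
    rcases hdir with ⟨a, ha⟩ | ⟨b, hb⟩ <;> simp_all [sylBit]

theorem ltl_iff_inlt_sgn (hH : D.IsBinaryTree H) {x y : List D.Syll} (hx : x ∈ H) (hy : y ∈ H) :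
    D.ltl x y ↔ inlt (D.sgn x) (D.sgn y) := by
  refine ⟨hH.inlt_sgn_of_ltl hx hy, fun h => ?_⟩
  have hxy : x ≠ y := by rintro rfl; exact inlt_asymm h h
  exact (ltl_or_ltl_of_ne hxy).resolve_right fun hyx =>
    inlt_asymm h (hH.inlt_sgn_of_ltl hy hx hyx)

end IsBinaryTree

theorem IsString.of_infix {w s : List D.Syll} (hw : D.IsString w) (hs : s <:+: w) (hne : s ≠ []) :
    D.IsString s :=
  ⟨⟨hne, hw.1.2.infix hs⟩,
    fun p hp => ⟨fun h => (hw.2.1 p hp).1 (h.trans hs), fun h => (hw.2.1 p hp).2 (h.trans hs)⟩,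
    hw.2.2.infix hs⟩

theorem InHl.of_suffix {sgm tau : D.A → ℤ} {v : D.V} {x s : List D.Syll}
    (hx : D.InHl sgm tau v x) (hs : s <:+ x) : D.InHl sgm tau v s := by
  rcases eq_or_ne s [] with rfl | hne
  · exact Or.inl rfl
  obtain rfl | ⟨hstr, γ, hlast, hγ⟩ := hx
  · exact absurd (List.suffix_nil.mp hs) hne
  refine Or.inr ⟨hstr.of_infix hs.isInfix hne, γ, ?_, hγ⟩
  rw [List.getLast?_eq_some_getLast hne, hs.getLast hne, ← List.getLast?_eq_some_getLast, hlast]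

theorem IsString.sylSrc_eq_sylTgt {α γ : D.Syll} (h : D.IsString [α, γ]) :
    D.sylSrc α = D.sylTgt γ :=
  (List.isChain_cons_cons.mp h.1.2).1

theorem IsString.ne_sylInv {α γ : D.Syll} (h : D.IsString [α, γ]) : α ≠ D.sylInv γ :=
  (List.isChain_cons_cons.mp h.2.2).1

theorem IsString.not_mem_ρ_of_inl {a b : D.A} (h : D.IsString [.inl a, .inl b]) :
    [a, b] ∉ D.ρ :=
  fun hp => (h.2.1 _ hp).1 (List.infix_refl _)

theorem IsString.not_mem_ρ_of_inr {a b : D.A} (h : D.IsString [.inr a, .inr b]) :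
    [b, a] ∉ D.ρ :=
  fun hp => (h.2.1 _ hp).2 (List.infix_refl _)

theorem eq_of_sylBit_eq_of_isString {α β γ : D.Syll} (hα : D.IsString [α, γ])
    (hβ : D.IsString [β, γ]) (hbit : D.sylBit α = D.sylBit β) : α = β := by
  rcases α with a | a <;> rcases β with a' | a' <;> simp only [sylBit, reduceCtorEq] at hbit
  · rcases γ with b | b
    · rw [D.unblocked_left b a a' hα.sylSrc_eq_sylTgt hβ.sylSrc_eq_sylTgt hα.not_mem_ρ_of_inl
        hβ.not_mem_ρ_of_inl]
    · have hab : a ≠ b := fun h => hα.ne_sylInv (by rw [h]; rfl)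
      have ha'b : a' ≠ b := fun h => hβ.ne_sylInv (by rw [h]; rfl)
      obtain h | h | h :=
        D.two_out _ a a' b hα.sylSrc_eq_sylTgt hβ.sylSrc_eq_sylTgt rfl
      exacts [congrArg _ h, absurd h hab, absurd h ha'b]
  · rcases γ with b | b
    · have hab : a ≠ b := fun h => hα.ne_sylInv (by rw [h]; rfl)
      have ha'b : a' ≠ b := fun h => hβ.ne_sylInv (by rw [h]; rfl)
      obtain h | h | h :=
        D.two_in _ a a' b hα.sylSrc_eq_sylTgt hβ.sylSrc_eq_sylTgt rfl
      exacts [congrArg _ h, absurd h hab, absurd h ha'b]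
    · rw [D.unblocked_right b a a' hα.sylSrc_eq_sylTgt.symm hβ.sylSrc_eq_sylTgt.symm
        hα.not_mem_ρ_of_inr hβ.not_mem_ρ_of_inr]

theorem eq_of_sylBit_eq_of_sylSgm_eq_neg_one {sgm tau : D.A → ℤ}
    (hsrc : ∀ a b, a ≠ b → D.src a = D.src b → sgm a = -sgm b)
    (htgt : ∀ a b, a ≠ b → D.tgt a = D.tgt b → tau a = -tau b)
    {α β : D.Syll} (hbit : D.sylBit α = D.sylBit β) (hs : D.sylSrc α = D.sylSrc β)
    (hα : D.sylSgm sgm tau α = -1) (hβ : D.sylSgm sgm tau β = -1) : α = β := by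
  rcases α with a | a <;> rcases β with b | b <;> simp only [sylBit, reduceCtorEq] at hbit
    <;> simp only [sylSgm] at hα hβ
  · by_contra hne
    have := hsrc a b (fun h => hne (congrArg _ h)) hs
    omega
  · by_contra hne
    have := htgt a b (fun h => hne (congrArg _ h)) hs
    omega

theorem isBinaryTree_inHl {sgm tau : D.A → ℤ}
    (hsrc : ∀ a b, a ≠ b → D.src a = D.src b → sgm a = -sgm b)
    (htgt : ∀ a b, a ≠ b → D.tgt a = D.tgt b → tau a = -tau b) (v : D.V) :
    D.IsBinaryTree {x | D.InHl sgm tau v x} where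
  suffix_mem _ _ hx hs := InHl.of_suffix hx hs
  eq_of_cons_mem α β z hα hβ hbit := by
    obtain ⟨hαs, γ, hαl, hαv, hασ⟩ := hα.resolve_left (List.cons_ne_nil α z)
    obtain ⟨hβs, δ, hβl, hβv, hβσ⟩ := hβ.resolve_left (List.cons_ne_nil β z)
    rcases z with _ | ⟨ε, z⟩
    · simp only [List.getLast?_singleton, Option.some_inj] at hαl hβl
      subst hαl hβl
      exact eq_of_sylBit_eq_of_sylSgm_eq_neg_one hsrc htgt hbit (hαv.trans hβv.symm) hασ hβσ
    · exact eq_of_sylBit_eq_of_isString (hαs.of_infix ⟨[], z, rfl⟩ (by simp))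
        (hβs.of_infix ⟨[], z, rfl⟩ (by simp)) hbit

end StringAlgData

theorem sgn_orderEmbedding_general (D : StringAlgData) (sgm tau : D.A → ℤ)
    (hsrc : ∀ a b, a ≠ b → D.src a = D.src b → sgm a = -sgm b)
    (htgt : ∀ a b, a ≠ b → D.tgt a = D.tgt b → tau a = -tau b)
    (v : D.V) :
    (∀ x y : List D.Syll, D.InHl sgm tau v x → D.InHl sgm tau v y →
      D.sgn x = D.sgn y → x = y) ∧
    (∀ x y : List D.Syll, D.InHl sgm tau v x → D.InHl sgm tau v y →
      (D.ltl x y ↔ inlt (D.sgn x) (D.sgn y))) :=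
  have hH := D.isBinaryTree_inHl hsrc htgt v
  ⟨fun _ _ hx hy => hH.sgn_injOn hx hy, fun _ _ => hH.ltl_iff_inlt_sgn⟩

/-- For a string algebra datum with sign maps and a vertex `v`, the
map `sgn : (H_l(v), <_l) → ({0,1}*, <₂)` is an order embedding: it is injective and
`𝔵 <_l 𝔶 ↔ sgn 𝔵 <₂ sgn 𝔶` for all `𝔵, 𝔶 ∈ H_l(v)`. -/
theorem sgn_orderEmbedding (D : StringAlgData) (sgm tau : D.A → ℤ)
    (hsgm : ∀ a, sgm a = 1 ∨ sgm a = -1) (htau : ∀ a, tau a = 1 ∨ tau a = -1)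
    (hsrc : ∀ a b, a ≠ b → D.src a = D.src b → sgm a = -sgm b)
    (htgt : ∀ a b, a ≠ b → D.tgt a = D.tgt b → tau a = -tau b)
    (hcomp : ∀ a b, D.src a = D.tgt b → [a, b] ∉ D.ρ → sgm a = -tau b)
    (v : D.V) :
    (∀ x y : List D.Syll, D.InHl sgm tau v x → D.InHl sgm tau v y →
      D.sgn x = D.sgn y → x = y) ∧
    (∀ x y : List D.Syll, D.InHl sgm tau v x → D.InHl sgm tau v y →
      (D.ltl x y ↔ inlt (D.sgn x) (D.sgn y))) :=
  sgn_orderEmbedding_general D sgm tau hsrc htgt v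
end

section
/- Let (Q, ρ, σ, τ) be a string algebra datum with sign maps and let v ∈ Q₀. Then the image sgn(H_l(v)) = {sgn(𝔵) : 𝔵 ∈ H_l(v)} ⊆ {0,1}* is a regular language: there is a deterministic finite automaton M over {0,1} whose accepted language L(M) equals sgn(H_l(v)). -/
/-- A deterministic finite automaton with a partial transition function. -/
structure PDFA (σ : Type) where
  /-- the (finite) set of states -/
  State : Type
  finState : Finite State
  /-- the start state -/
  start : State
  /-- the set of accept states -/
  accept : Set State
  /-- the partial transition function -/
  step : State → σ → Option State

namespace PDFA

variable {σ : Type} (M : PDFA σ)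

/-- The extended (partial) transition function `δ̂`, reading the word left to right. -/
def run (q : M.State) (w : List σ) : Option M.State :=
  w.foldlM (fun q a => M.step q a) q

/-- The language accepted by the automaton. -/
def lang : Set (List σ) := {w | ∃ q ∈ M.accept, M.run M.start w = some q}

end PDFA

/-!
Read a string of `H_l(v)` from its source end, so that its sign sequence is produced letter by
letter. Each new syllable is determined by its sign: at the start by the sign conditions at `v`,
afterwards because at most one direct and one inverse syllable can follow a given one (the
string algebra conditions). Whether a syllable may be appended depends only on the previous
`max |p|, p ∈ ρ` syllables. Hence the automaton whose states are these windows of the string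
read so far accepts exactly `sgn(H_l(v))`.
-/

namespace List

variable {α : Type}

theorem prefix_cons_take_iff {l t : List α} {a : α} {n : ℕ} (hl : l.length ≤ n + 1) :
    l <+: a :: t.take n ↔ l <+: a :: t := by
  rw [← take_succ_cons, prefix_take_iff]
  exact and_iff_left hl

theorem take_cons_take (a : α) (t : List α) (n : ℕ) :
    (a :: t.take n).take n = (a :: t).take n := by
  rw [← take_succ_cons, take_take, min_eq_left n.le_succ]

def IsBuiltBy (adm : List α → α → Prop) : List α → Prop
  | [] => True
  | β :: t => adm t β ∧ IsBuiltBy adm t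

end List

namespace PDFA

variable {α σ : Type}

theorem run_append_singleton (M : PDFA σ) (q : M.State) (x : List σ) (b : σ) :
    M.run q (x ++ [b]) = (M.run q x).bind (M.step · b) := by
  simp [run, List.foldlM_append]

section Window

variable [Finite α] (f : α → σ) (N : ℕ) (adm : List α → α → Prop)

noncomputable abbrev window : PDFA σ where
  State := {t : List α // t.length ≤ N}
  finState := (List.finite_length_le α N).to_subtype
  start := ⟨[], Nat.zero_le N⟩
  accept := Set.univ
  step q b := by
    classical
    exact if h : ∃ β, adm q.1 β ∧ f β = b then
      some ⟨(h.choose :: q.1).take N, List.length_take_le _ _⟩ else none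

variable {f N adm}

theorem window_step_eq_some_iff
    (hdet : ∀ t β β', adm t β → adm t β' → f β = f β' → β = β')
    {q q' : (window f N adm).State} {b : σ} :
    (window f N adm).step q b = some q' ↔ ∃ β, adm q.1 β ∧ f β = b ∧ q'.1 = (β :: q.1).take N := by
  by_cases h : ∃ β, adm q.1 β ∧ f β = b
  · obtain ⟨hadm, hf⟩ := h.choose_spec
    rw [show (window f N adm).step q b = some ⟨_, List.length_take_le N (h.choose :: q.1)⟩ from
      dif_pos h, Option.some.injEq]
    constructor
    · rintro rfl
      exact ⟨h.choose, hadm, hf, rfl⟩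
    · rintro ⟨β, hβ, rfl, hq'⟩
      exact Subtype.ext (by rw [hq', hdet _ _ _ hadm hβ hf])
  · rw [show (window f N adm).step q b = none from dif_neg h]
    simp only [reduceCtorEq, false_iff]
    rintro ⟨β, hβ, hf, -⟩
    exact h ⟨β, hβ, hf⟩

theorem run_window_start_eq_some_iff
    (hwin : ∀ t β, adm (t.take N) β ↔ adm t β)
    (hdet : ∀ t β β', adm t β → adm t β' → f β = f β' → β = β')
    (x : List σ) (q : (window f N adm).State) :
    (window f N adm).run (window f N adm).start x = some q ↔
      ∃ u : List α, u.IsBuiltBy adm ∧ (u.map f).reverse = x ∧ q.1 = u.take N := by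
  induction x using List.reverseRecOn generalizing q with
  | nil =>
    simp only [run, List.foldlM_nil, Option.pure_def, Option.some.injEq, List.reverse_eq_nil_iff,
      List.map_eq_nil_iff]
    constructor
    · rintro rfl
      exact ⟨[], trivial, rfl, List.take_nil.symm⟩
    · rintro ⟨u, -, rfl, hq⟩
      exact Subtype.ext (hq.trans List.take_nil).symm
  | append_singleton y b ih =>
    simp only [run_append_singleton, Option.bind_eq_some_iff, ih, window_step_eq_some_iff hdet,
      List.reverse_eq_append_iff, List.reverse_singleton, List.singleton_append,
      List.map_eq_cons_iff]
    constructor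
    · rintro ⟨q', ⟨u, hu, rfl, hq'⟩, β, hβ, rfl, hq⟩
      rw [hq'] at hβ hq
      exact ⟨β :: u, ⟨(hwin u β).1 hβ, hu⟩, ⟨β, u, rfl, rfl, (List.reverse_reverse _).symm⟩,
        hq.trans (List.take_cons_take β u N)⟩
    · rintro ⟨_, hbuilt, ⟨β, u, rfl, rfl, hy⟩, hq⟩
      obtain ⟨hβ, hu⟩ := hbuilt
      refine ⟨⟨u.take N, List.length_take_le N u⟩, ⟨u, hu, ?_, rfl⟩, β, (hwin u β).2 hβ, rfl,
        hq.trans (List.take_cons_take β u N).symm⟩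
      rw [hy, List.reverse_reverse]

theorem lang_window
    (hwin : ∀ t β, adm (t.take N) β ↔ adm t β)
    (hdet : ∀ t β β', adm t β → adm t β' → f β = f β' → β = β') :
    (window f N adm).lang = (fun u : List α => (u.map f).reverse) '' {u | u.IsBuiltBy adm} := by
  ext x
  simp only [lang, Set.mem_univ, true_and, run_window_start_eq_some_iff hwin hdet, Set.mem_image,
    Set.mem_ofPred_eq]
  constructor
  · rintro ⟨-, u, hu, hx, -⟩
    exact ⟨u, hu, hx⟩
  · rintro ⟨u, hu, hx⟩
    exact ⟨⟨u.take N, List.length_take_le N u⟩, u, hu, hx, rfl⟩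

end Window

end PDFA

namespace StringAlgData

variable (D : StringAlgData) {sgm tau : D.A → ℤ} {v : D.V}

theorem sgn_eq_reverse_map (w : List D.Syll) : D.sgn w = (w.map D.sylBit).reverse := by
  induction w with
  | nil => rfl
  | cons α w ih => simp [sgn, ih]

def NoRelationPrefix (w : List D.Syll) : Prop :=
  ∀ p ∈ D.ρ, ¬ p.map Sum.inl <+: w ∧ ¬ (p.map Sum.inr).reverse <+: w

/-- The condition for `β :: t` to lie in `H_l(v)` once `t` does. Relations and inverse relations
are only checked as prefixes of `β :: t`: those not passing through `β` lie inside `t`. -/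
def CanPrepend (sgm tau : D.A → ℤ) (v : D.V) : List D.Syll → D.Syll → Prop
  | [], β => D.sylSrc β = v ∧ D.sylSgm sgm tau β = -1
  | α :: t, β => D.sylSrc β = D.sylTgt α ∧ β ≠ D.sylInv α ∧ D.NoRelationPrefix (β :: α :: t)

theorem isString_iff {w : List D.Syll} :
    D.IsString w ↔ (w ≠ [] ∧ w.IsChain (fun α β => D.sylSrc α = D.sylTgt β)) ∧
      (∀ p ∈ D.ρ, ¬ (p.map Sum.inl) <:+: w ∧ ¬ ((p.map Sum.inr).reverse) <:+: w) ∧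
      w.IsChain (fun α β => α ≠ D.sylInv β) :=
  Iff.rfl

theorem isString_singleton (β : D.Syll) : D.IsString [β] := by
  refine ⟨⟨List.cons_ne_nil β [], List.isChain_singleton β⟩, fun p hp => ?_,
    List.isChain_singleton β⟩
  have hlen := D.ρ_len p hp
  constructor <;> intro h <;> have := h.length_le <;>
    simp only [List.length_map, List.length_reverse, List.length_singleton] at this <;> omega

theorem isString_cons_cons_iff {α β : D.Syll} {t : List D.Syll} :
    D.IsString (β :: α :: t) ↔ (D.sylSrc β = D.sylTgt α ∧ β ≠ D.sylInv α ∧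
      D.NoRelationPrefix (β :: α :: t)) ∧ D.IsString (α :: t) := by
  simp only [isString_iff, NoRelationPrefix, List.isChain_cons_cons,
    List.infix_cons_iff (l₂ := α :: t), not_or, ne_eq, reduceCtorEq, not_false_eq_true, true_and,
    imp_and, forall_and]
  tauto

theorem inHl_cons_iff {β : D.Syll} {t : List D.Syll} :
    D.InHl sgm tau v (β :: t) ↔ D.CanPrepend sgm tau v t β ∧ D.InHl sgm tau v t := by
  cases t with
  | nil => simp [InHl, CanPrepend, D.isString_singleton β]
  | cons α t =>
    simp only [InHl, CanPrepend, isString_cons_cons_iff, List.getLast?_cons_cons, reduceCtorEq,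
      false_or, and_assoc]

theorem isBuiltBy_canPrepend_iff_inHl (w : List D.Syll) :
    w.IsBuiltBy (D.CanPrepend sgm tau v) ↔ D.InHl sgm tau v w := by
  induction w with
  | nil => exact iff_of_true trivial (Or.inl rfl)
  | cons β t ih => rw [inHl_cons_iff, ← ih]; rfl

theorem noRelationPrefix_cons_take_iff {β : D.Syll} {t : List D.Syll} {n : ℕ}
    (hn : D.ρ.sup List.length ≤ n + 1) :
    D.NoRelationPrefix (β :: t.take n) ↔ D.NoRelationPrefix (β :: t) := by
  have hlen {p : List D.A} (hp : p ∈ D.ρ) : p.length ≤ n + 1 := (Finset.le_sup hp).trans hn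
  refine forall₂_congr fun p hp => and_congr (not_congr ?_) (not_congr ?_) <;>
    exact List.prefix_cons_take_iff (by simpa using hlen hp)

theorem canPrepend_take_succ {n : ℕ} (hn : D.ρ.sup List.length ≤ n + 1) (t : List D.Syll)
    (β : D.Syll) :
    D.CanPrepend sgm tau v (t.take (n + 1)) β ↔ D.CanPrepend sgm tau v t β := by
  cases t with
  | nil => rfl
  | cons α t =>
    simp only [List.take_succ_cons, CanPrepend]
    rw [← List.take_succ_cons, D.noRelationPrefix_cons_take_iff (Nat.le_succ_of_le hn)]

theorem eq_of_canPrepend_nil (hsrc : ∀ a b, a ≠ b → D.src a = D.src b → sgm a = -sgm b)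
    (htgt : ∀ a b, a ≠ b → D.tgt a = D.tgt b → tau a = -tau b) {β β' : D.Syll}
    (h : D.CanPrepend sgm tau v [] β) (h' : D.CanPrepend sgm tau v [] β')
    (hbit : D.sylBit β = D.sylBit β') : β = β' := by
  obtain ⟨hv, hs⟩ := h
  obtain ⟨hv', hs'⟩ := h'
  rcases β with b | b <;> rcases β' with b' | b' <;> cases hbit <;> by_contra hne <;>
    simp only [sylSrc, sylSgm, Sum.inl.injEq, Sum.inr.injEq] at hv hv' hs hs' hne
  · have := hsrc b b' hne (hv.trans hv'.symm)
    omega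
  · have := htgt b b' hne (hv.trans hv'.symm)
    omega

theorem eq_of_canPrepend_cons {α β β' : D.Syll} {t : List D.Syll}
    (h : D.CanPrepend sgm tau v (α :: t) β) (h' : D.CanPrepend sgm tau v (α :: t) β')
    (hbit : D.sylBit β = D.sylBit β') : β = β' := by
  obtain ⟨hs, hinv, hrel⟩ := h
  obtain ⟨hs', hinv', hrel'⟩ := h'
  rcases α with a | a <;> rcases β with b | b <;> rcases β' with b' | b' <;> cases hbit
  · rw [D.unblocked_left a b b' hs hs' (fun hp => (hrel _ hp).1 ⟨t, rfl⟩)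
      (fun hp => (hrel' _ hp).1 ⟨t, rfl⟩)]
  · rcases D.two_in _ b b' a hs hs' rfl with rfl | rfl | rfl
    · rfl
    · exact (hinv rfl).elim
    · exact (hinv' rfl).elim
  · rcases D.two_out _ b b' a hs hs' rfl with rfl | rfl | rfl
    · rfl
    · exact (hinv rfl).elim
    · exact (hinv' rfl).elim
  · rw [D.unblocked_right a b b' hs.symm hs'.symm (fun hp => (hrel _ hp).2 ⟨t, rfl⟩)
      (fun hp => (hrel' _ hp).2 ⟨t, rfl⟩)]

theorem eq_of_canPrepend (hsrc : ∀ a b, a ≠ b → D.src a = D.src b → sgm a = -sgm b)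
    (htgt : ∀ a b, a ≠ b → D.tgt a = D.tgt b → tau a = -tau b) {t : List D.Syll}
    {β β' : D.Syll} (h : D.CanPrepend sgm tau v t β) (h' : D.CanPrepend sgm tau v t β')
    (hbit : D.sylBit β = D.sylBit β') : β = β' := by
  rcases t with _ | ⟨α, t⟩
  exacts [D.eq_of_canPrepend_nil hsrc htgt h h' hbit, D.eq_of_canPrepend_cons h h' hbit]

end StringAlgData

theorem sgn_hammock_regular_general (D : StringAlgData) (sgm tau : D.A → ℤ)
    (hsrc : ∀ a b, a ≠ b → D.src a = D.src b → sgm a = -sgm b)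
    (htgt : ∀ a b, a ≠ b → D.tgt a = D.tgt b → tau a = -tau b)
    (v : D.V) :
    ∃ M : PDFA Bool, M.lang = D.sgn '' {w : List D.Syll | D.InHl sgm tau v w} := by
  have := D.finA
  refine ⟨PDFA.window D.sylBit (D.ρ.sup List.length + 1) (D.CanPrepend sgm tau v), ?_⟩
  have hH : {w | D.InHl sgm tau v w} = {u | u.IsBuiltBy (D.CanPrepend sgm tau v)} :=
    Set.ext fun w => (D.isBuiltBy_canPrepend_iff_inHl w).symm
  rw [PDFA.lang_window (D.canPrepend_take_succ (Nat.le_succ _))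
    (fun _ _ _ => D.eq_of_canPrepend hsrc htgt), hH, funext D.sgn_eq_reverse_map]

/-- For a string algebra datum with sign maps and a vertex `v`, the
image `sgn(H_l(v)) ⊆ {0,1}*` is a regular language: there is a DFA `M` over `{0,1}`
with `L(M) = sgn(H_l(v))`. -/
theorem sgn_hammock_regular (D : StringAlgData) (sgm tau : D.A → ℤ)
    (hsgm : ∀ a, sgm a = 1 ∨ sgm a = -1) (htau : ∀ a, tau a = 1 ∨ tau a = -1)
    (hsrc : ∀ a b, a ≠ b → D.src a = D.src b → sgm a = -sgm b)
    (htgt : ∀ a b, a ≠ b → D.tgt a = D.tgt b → tau a = -tau b)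
    (hcomp : ∀ a b, D.src a = D.tgt b → [a, b] ∉ D.ρ → sgm a = -tau b)
    (v : D.V) :
    ∃ M : PDFA Bool, M.lang = D.sgn '' {w : List D.Syll | D.InHl sgm tau v w} :=
  sgn_hammock_regular_general D sgm tau hsrc htgt v
end
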